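/- arXiv:2105.04228 — 3 statements merged into one kernel-verified Lean document; each statement's English description precedes it below -/
import Mathlib

section
/- For every integer $j \geq 1$, $\mathbb{E}[(1 - \tilde Y_j)^k] \to 0$ superpolynomially slowly is quantified as follows: for every $\delta > 0$, with $M_j := e^{j(1+\delta)}$, one has $\mathbb{P}(\tilde\tau_j \geq M_j) = \mathcal{O}(e^{-cj})$ for some constant $c > 0$ depending on $\delta$; in particular $\sum_j \mathbb{P}(\tilde\tau_j \geq e^{j(1+\delta)}) < \infty$. -/
/-!
With `u = e^{-t}`, the elementary bound `u^ε (1 - u)^k ≤ k^{-ε}` (from `(1 - u)^k ≤ e^{-ku}` and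
`y^ε e^{-y} ≤ 1`) trades the part `e^{-εt}` of the Gamma density for polynomial decay in `k`, so
`P(τ_j > k) ≤ k^{-ε} ∫ t^{j-1} e^{-(1-ε)t} dt / j! ≤ k^{-ε} (1 - ε)^{-j}`: this is the
Chernoff tilting of the Gamma(j, 1) law. At `k ≈ e^{j(1+δ)}/2` the bound is
`2 exp(-j (ε(1+δ) + log(1 - ε)))`, and the rate is positive for `ε = δ/(2+δ)` because
`log(1 - ε) ≥ -ε/(1 - ε) = -δ/2`.
-/

open MeasureTheory Real Set

lemma Real.rpow_mul_exp_neg_le_one {ε x : ℝ} (hε0 : 0 ≤ ε) (hε1 : ε ≤ 1) (hx : 0 ≤ x) :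
    x ^ ε * exp (-x) ≤ 1 := by
  have bernoulli : x ^ ε ≤ 1 + ε * (x - 1) := by
    simpa using rpow_one_add_le_one_add_mul_self (s := x - 1) (by linarith) hε0 hε1
  calc x ^ ε * exp (-x) ≤ exp x * exp (-x) := by
        gcongr
        nlinarith [add_one_le_exp x]
    _ = 1 := by rw [← exp_add, add_neg_cancel, exp_zero]

lemma Real.rpow_mul_one_sub_pow_le {ε u : ℝ} (hε0 : 0 ≤ ε) (hε1 : ε ≤ 1) (hu0 : 0 ≤ u)
    (hu1 : u ≤ 1) {k : ℕ} (hk : 0 < k) :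
    u ^ ε * (1 - u) ^ k ≤ (k : ℝ) ^ (-ε) := by
  have hk' : (0 : ℝ) < k := by exact_mod_cast hk
  have hpow : (1 - u) ^ k ≤ exp (-(k * u)) := by
    calc (1 - u) ^ k ≤ exp (-u) ^ k := by gcongr; linarith [add_one_le_exp (-u)]
      _ = exp (-(k * u)) := by rw [← exp_nat_mul, mul_neg]
  calc u ^ ε * (1 - u) ^ k ≤ u ^ ε * exp (-(k * u)) := by gcongr
    _ = (k : ℝ) ^ (-ε) * ((k * u) ^ ε * exp (-(k * u))) := by
        rw [mul_rpow hk'.le hu0, rpow_neg hk'.le]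
        field_simp
    _ ≤ (k : ℝ) ^ (-ε) := by
        have := rpow_mul_exp_neg_le_one hε0 hε1 (by positivity : (0 : ℝ) ≤ k * u)
        have : 0 ≤ (k : ℝ) ^ (-ε) := by positivity
        nlinarith

lemma Real.integral_pow_mul_exp_neg_mul_Ioi (n : ℕ) {r : ℝ} (hr : 0 < r) :
    ∫ t in Ioi (0 : ℝ), t ^ n * exp (-(r * t)) = (n.factorial : ℝ) / r ^ (n + 1) := by
  have h := integral_rpow_mul_exp_neg_mul_Ioi (a := n + 1) (by positivity) hr
  simp only [add_sub_cancel_right, rpow_natCast, Gamma_nat_eq_factorial] at h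
  rw [h, ← rpow_natCast, Nat.cast_add_one, one_div, inv_rpow hr.le]
  ring

lemma Real.integrableOn_pow_mul_exp_neg_mul_Ioi (n : ℕ) {r : ℝ} (hr : 0 < r) :
    IntegrableOn (fun t ↦ t ^ n * exp (-(r * t))) (Ioi 0) :=
  Integrable.of_integral_ne_zero <| by
    rw [integral_pow_mul_exp_neg_mul_Ioi n hr]; positivity

lemma integral_pow_mul_exp_neg_mul_one_sub_exp_neg_pow_le {ε : ℝ} (hε0 : 0 ≤ ε) (hε1 : ε < 1)
    {j k : ℕ} (hj : 1 ≤ j) (hk : 0 < k) :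
    (1 / (j.factorial : ℝ)) * ∫ t in Ioi (0 : ℝ), t ^ (j - 1) * exp (-t) * (1 - exp (-t)) ^ k
      ≤ (k : ℝ) ^ (-ε) / (1 - ε) ^ j := by
  obtain ⟨n, rfl⟩ := Nat.exists_eq_add_of_le' hj
  rw [add_tsub_cancel_right]
  have hr : 0 < 1 - ε := by linarith
  have hpt : ∀ t ∈ Ioi (0 : ℝ), t ^ n * exp (-t) * (1 - exp (-t)) ^ k
      ≤ (k : ℝ) ^ (-ε) * (t ^ n * exp (-((1 - ε) * t))) := by
    intro t ht
    have ht : 0 ≤ t := le_of_lt ht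
    have hsplit : exp (-t) = exp (-((1 - ε) * t)) * exp (-t) ^ ε := by
      rw [← exp_mul, ← exp_add]; ring_nf
    calc t ^ n * exp (-t) * (1 - exp (-t)) ^ k
        = (exp (-t) ^ ε * (1 - exp (-t)) ^ k) * (t ^ n * exp (-((1 - ε) * t))) := by
          nth_rw 1 [hsplit]; ring
      _ ≤ (k : ℝ) ^ (-ε) * (t ^ n * exp (-((1 - ε) * t))) := by
          gcongr
          exact rpow_mul_one_sub_pow_le hε0 hε1.le (exp_pos _).le (by simpa using ht) hk
  have hnonneg : ∀ t ∈ Ioi (0 : ℝ), 0 ≤ t ^ n * exp (-t) * (1 - exp (-t)) ^ k := by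
    intro t ht
    have : exp (-t) ≤ 1 := by simpa using le_of_lt ht
    have : 0 ≤ 1 - exp (-t) := by linarith
    have := (mem_Ioi.mp ht).le
    positivity
  have hint := (integrableOn_pow_mul_exp_neg_mul_Ioi n hr).const_mul ((k : ℝ) ^ (-ε))
  have hfac : ((n + 1).factorial : ℝ) = (n + 1) * n.factorial := by
    push_cast [Nat.factorial_succ]; ring
  calc (1 / ((n + 1).factorial : ℝ)) *
        ∫ t in Ioi (0 : ℝ), t ^ n * exp (-t) * (1 - exp (-t)) ^ k
      ≤ (1 / ((n + 1).factorial : ℝ)) *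
        ∫ t in Ioi (0 : ℝ), (k : ℝ) ^ (-ε) * (t ^ n * exp (-((1 - ε) * t))) := by
        gcongr ?_ * ?_
        exact setIntegral_mono_of_nonneg hnonneg hpt hint
    _ = (k : ℝ) ^ (-ε) / (1 - ε) ^ (n + 1) / (n + 1) := by
        rw [integral_const_mul, integral_pow_mul_exp_neg_mul_Ioi n hr, hfac]
        field_simp
    _ ≤ (k : ℝ) ^ (-ε) / (1 - ε) ^ (n + 1) :=
        div_le_self (by positivity) (by linarith [n.cast_nonneg (α := ℝ)])

lemma exists_pos_lt_one_add_log_one_sub_pos {δ : ℝ} (hδ : 0 < δ) :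
    ∃ ε, 0 < ε ∧ ε < 1 ∧ 0 < ε * (1 + δ) + log (1 - ε) := by
  refine ⟨δ / (2 + δ), by positivity, by rw [div_lt_one (by positivity)]; linarith, ?_⟩
  have hlog := one_sub_inv_le_log_of_pos (x := 1 - δ / (2 + δ))
    (by rw [sub_pos, div_lt_one (by positivity)]; linarith)
  have hval : 1 - (1 - δ / (2 + δ))⁻¹ = -(δ / 2) := by field_simp; ring
  have : 0 < δ / (2 + δ) * (1 + δ) - δ / 2 := by
    rw [div_mul_eq_mul_div, div_sub_div _ _ (by positivity) two_ne_zero]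
    apply div_pos _ (by positivity)
    nlinarith
  linarith

lemma ceil_half_exp_rpow_neg_div_le {ε : ℝ} (hε0 : 0 ≤ ε) (hε1 : ε < 1) (j : ℕ) (a : ℝ) :
    (⌈exp (j * a) / 2⌉₊ : ℝ) ^ (-ε) / (1 - ε) ^ j ≤ 2 * exp (-(ε * a + log (1 - ε)) * j) := by
  have hy : 0 < exp (j * a) / 2 := by positivity
  have hpow : (1 - ε) ^ j = exp (log (1 - ε) * j) := by
    rw [mul_comm, exp_nat_mul, exp_log (by linarith)]
  calc (⌈exp (j * a) / 2⌉₊ : ℝ) ^ (-ε) / (1 - ε) ^ j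
      ≤ (exp (j * a) / 2) ^ (-ε) / (1 - ε) ^ j := by
        gcongr ?_ / _
        exact rpow_le_rpow_of_nonpos hy (Nat.le_ceil _) (neg_nonpos.mpr hε0)
    _ = 2 ^ ε * exp (-(ε * a + log (1 - ε)) * j) := by
        rw [div_rpow (exp_pos _).le zero_le_two, rpow_neg (exp_pos _).le, rpow_neg zero_le_two,
          ← exp_mul, hpow, ← exp_neg, div_inv_eq_mul, mul_div_right_comm, ← exp_sub, mul_comm]
        ring_nf
    _ ≤ 2 * exp (-(ε * a + log (1 - ε)) * j) := by
        gcongr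
        simpa using rpow_le_rpow_of_exponent_le one_le_two (by linarith : ε ≤ 1)

lemma Nat.ceil_half_lt_self {x : ℝ} (hx : 2 ≤ x) : (⌈x / 2⌉₊ : ℝ) < x := by
  linarith [Nat.ceil_lt_add_one (by positivity : 0 ≤ x / 2)]

lemma summable_of_le_mul_exp_neg_mul {f : ℕ → ℝ} {c C : ℝ} (hf : ∀ j, 0 ≤ f j) (hc : 0 < c)
    (hle : ∀ j, 1 ≤ j → f j ≤ C * exp (-c * j)) : Summable f := by
  have hgeom : Summable fun j : ℕ ↦ C * exp (-c * j) :=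
    ((summable_exp_nat_mul_iff.mpr (neg_neg_of_pos hc)).mul_left C).congr fun j ↦ by
      rw [mul_comm (j : ℝ)]
  exact (summable_nat_add_iff 1).mp <| ((summable_nat_add_iff 1).mpr hgeom).of_nonneg_of_le
    (fun j ↦ hf (j + 1)) fun j ↦ hle (j + 1) j.succ_pos

theorem stmt4_general {Ω : Type*} [MeasurableSpace Ω] (μ : Measure Ω) [IsProbabilityMeasure μ]
    (τ : ℕ → Ω → ℕ)
    (hdist : ∀ j, 1 ≤ j → ∀ k : ℕ, (μ {ω | k < τ j ω}).toReal =
      (1 / (j.factorial : ℝ)) *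
        ∫ t in Set.Ioi (0 : ℝ), t ^ (j - 1) * Real.exp (-t) * (1 - Real.exp (-t)) ^ k)
    (δ : ℝ) (hδ : 0 < δ) :
    (∃ c > (0 : ℝ), ∃ C : ℝ, ∀ j : ℕ, 1 ≤ j →
        (μ {ω | Real.exp ((j : ℝ) * (1 + δ)) ≤ (τ j ω : ℝ)}).toReal ≤ C * Real.exp (-c * j)) ∧
      Summable (fun j : ℕ =>
        (μ {ω | Real.exp ((j : ℝ) * (1 + δ)) ≤ (τ j ω : ℝ)}).toReal) := by
  obtain ⟨ε, hε0, hε1, hc⟩ := exists_pos_lt_one_add_log_one_sub_pos hδ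
  set c := ε * (1 + δ) + log (1 - ε)
  have key : ∀ j : ℕ, 1 ≤ j →
      (μ {ω | exp ((j : ℝ) * (1 + δ)) ≤ (τ j ω : ℝ)}).toReal ≤ 2 * exp (-c * j) := by
    intro j hj
    set x := exp ((j : ℝ) * (1 + δ))
    have hx : 2 ≤ x := by
      have : (1 : ℝ) ≤ j := by exact_mod_cast hj
      nlinarith [add_one_le_exp ((j : ℝ) * (1 + δ))]
    have hsub : {ω | x ≤ (τ j ω : ℝ)} ⊆ {ω | ⌈x / 2⌉₊ < τ j ω} := fun ω hω ↦ by
      exact_mod_cast (Nat.ceil_half_lt_self hx).trans_le hω.out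
    calc (μ {ω | x ≤ (τ j ω : ℝ)}).toReal
        ≤ (μ {ω | ⌈x / 2⌉₊ < τ j ω}).toReal :=
          ENNReal.toReal_mono (measure_ne_top _ _) (measure_mono hsub)
      _ ≤ (⌈x / 2⌉₊ : ℝ) ^ (-ε) / (1 - ε) ^ j :=
          (hdist j hj _).trans_le <| integral_pow_mul_exp_neg_mul_one_sub_exp_neg_pow_le
            hε0.le hε1 hj (Nat.ceil_pos.mpr (by positivity))
      _ ≤ 2 * exp (-c * j) := ceil_half_exp_rpow_neg_div_le hε0.le hε1 j (1 + δ)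
  exact ⟨⟨c, hc, 2, key⟩,
    summable_of_le_mul_exp_neg_mul (fun _ ↦ ENNReal.toReal_nonneg) hc key⟩

/-- Exponential upper-tail bound for the jumping times: for every `δ > 0`, with
`M_j = e^{j(1+δ)}`, one has `μ(τ_j ≥ M_j) = O(e^{-cj})` for some `c > 0`; in particular
`∑_j μ(τ_j ≥ e^{j(1+δ)}) < ∞`. -/
theorem stmt4 {Ω : Type*} [MeasurableSpace Ω] (μ : Measure Ω) [IsProbabilityMeasure μ]
    (τ : ℕ → Ω → ℕ) (hτ : ∀ j, Measurable (τ j))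
    (hdist : ∀ j, 1 ≤ j → ∀ k : ℕ, (μ {ω | k < τ j ω}).toReal =
      (1 / (j.factorial : ℝ)) *
        ∫ t in Set.Ioi (0 : ℝ), t ^ (j - 1) * Real.exp (-t) * (1 - Real.exp (-t)) ^ k)
    (δ : ℝ) (hδ : 0 < δ) :
    (∃ c > (0 : ℝ), ∃ C : ℝ, ∀ j : ℕ, 1 ≤ j →
        (μ {ω | Real.exp ((j : ℝ) * (1 + δ)) ≤ (τ j ω : ℝ)}).toReal ≤ C * Real.exp (-c * j)) ∧
      Summable (fun j : ℕ =>
        (μ {ω | Real.exp ((j : ℝ) * (1 + δ)) ≤ (τ j ω : ℝ)}).toReal) :=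
  stmt4_general μ τ hdist δ hδ
end

section
/- Let $m \geq 2$ and define $\lambda_i(t) := (1-e^{-t})^{i-1} e^{-t}$ for $1 \leq i \leq m-1$ and $\lambda_m(t) := (1-e^{-t})^{m-1}$. Then $\int_0^\infty \Big(\sum_{i=1}^{m-1} i\, \lambda_i(t)\Big) e^{-\int_0^t \lambda_m(s)\,ds}\,dt + m = e^{H_{m-1}}$, where $H_{m-1}$ is the $(m-1)$-th harmonic number. -/
/-!
With `x = 1 - e^{-t}` the inner integral is `∫_0^t (1 - e^{-s})^n ds = t - Φₙ(t)`, where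
`Φₙ(t) = ∑_{i<n} x^{i+1}/(i+1)` is the `n`-th partial sum of `-log(1 - x) = t`.
The outer integrand is then the derivative of `F(t) = e^{Φₙ(t)} + n e^{Φₙ(t) - t}`, a consequence of
`(1 - x) ∑_{i=1}^n i x^{i-1} = ∑_{i<n} x^i - n x^n`. Since it is nonnegative, the improper integral
equals `F(∞) - F(0) = e^{Hₙ} - (n + 1)`, because `Φₙ(t) → Hₙ`.
-/

open MeasureTheory Real Finset Filter Topology

theorem sum_Icc_natCast_mul_pow_mul_one_sub {R : Type*} [CommRing R] (n : ℕ) (x : R) :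
    (∑ i ∈ Icc 1 n, (i : R) * x ^ (i - 1)) * (1 - x) = ∑ i ∈ range n, x ^ i - n * x ^ n := by
  induction n with
  | zero => simp
  | succ n ih =>
    rw [sum_Icc_succ_top (by omega), sum_range_succ, Nat.add_sub_cancel]
    push_cast
    linear_combination ih

noncomputable def truncatedLogSeries (n : ℕ) (t : ℝ) : ℝ :=
  ∑ i ∈ range n, (1 - exp (-t)) ^ (i + 1) / (i + 1)

@[simp]
theorem truncatedLogSeries_zero_right (n : ℕ) : truncatedLogSeries n 0 = 0 := by
  simp [truncatedLogSeries]

theorem hasDerivAt_truncatedLogSeries (n : ℕ) (t : ℝ) :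
    HasDerivAt (truncatedLogSeries n) ((∑ i ∈ range n, (1 - exp (-t)) ^ i) * exp (-t)) t := by
  have hbase : HasDerivAt (fun u => 1 - exp (-u)) (exp (-t)) t := by
    simpa using ((hasDerivAt_neg t).exp).const_sub 1
  rw [sum_mul]
  refine HasDerivAt.fun_sum fun i _ => ?_
  refine ((hbase.pow (i + 1)).div_const ((i : ℝ) + 1)).congr_deriv ?_
  rw [Nat.add_sub_cancel]
  push_cast
  field_simp

theorem integral_one_sub_exp_neg_pow (n : ℕ) (t : ℝ) :
    ∫ s in (0 : ℝ)..t, (1 - exp (-s)) ^ n = t - truncatedLogSeries n t := by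
  have hderiv (s : ℝ) : HasDerivAt (fun u => u - truncatedLogSeries n u) ((1 - exp (-s)) ^ n) s := by
    refine ((hasDerivAt_id s).sub (hasDerivAt_truncatedLogSeries n s)).congr_deriv ?_
    linear_combination geom_sum_mul (1 - exp (-s)) n
  rw [intervalIntegral.integral_eq_sub_of_hasDerivAt (fun s _ => hderiv s)
    (Continuous.intervalIntegrable (by fun_prop) 0 t)]
  simp

theorem tendsto_truncatedLogSeries (n : ℕ) :
    Tendsto (truncatedLogSeries n) atTop (𝓝 (harmonic n : ℝ)) := by
  have hx : Tendsto (fun t => 1 - exp (-t)) atTop (𝓝 1) := by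
    simpa using tendsto_const_nhds.sub (tendsto_exp_atBot.comp tendsto_neg_atTop_atBot)
  rw [harmonic]
  push_cast
  exact tendsto_finsetSum _ fun i _ => by simpa using (hx.pow (i + 1)).div_const ((i : ℝ) + 1)

theorem hasDerivAt_exp_truncatedLogSeries (n : ℕ) (t : ℝ) :
    HasDerivAt (fun t => exp (truncatedLogSeries n t) + n * exp (truncatedLogSeries n t - t))
      ((∑ i ∈ Icc 1 n, (i : ℝ) * (1 - exp (-t)) ^ (i - 1) * exp (-t)) *
        exp (-(t - truncatedLogSeries n t))) t := by
  have hΦ := hasDerivAt_truncatedLogSeries n t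
  refine (hΦ.exp.add (((hΦ.sub (hasDerivAt_id t)).exp).const_mul (n : ℝ))).congr_deriv ?_
  have hexp : exp (truncatedLogSeries n t) * exp (-t) = exp (truncatedLogSeries n t - t) := by
    rw [← exp_add, sub_eq_add_neg]
  simp only [← sum_mul, neg_sub, Pi.sub_apply, id_eq]
  linear_combination (∑ i ∈ range n, (1 - exp (-t)) ^ i) * hexp
    - exp (truncatedLogSeries n t - t) * sum_Icc_natCast_mul_pow_mul_one_sub n (1 - exp (-t))
    - n * exp (truncatedLogSeries n t - t) * geom_sum_mul (1 - exp (-t)) n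

theorem tendsto_exp_truncatedLogSeries (n : ℕ) :
    Tendsto (fun t => exp (truncatedLogSeries n t) + n * exp (truncatedLogSeries n t - t)) atTop
      (𝓝 (exp (harmonic n : ℝ))) := by
  have hΦ := tendsto_truncatedLogSeries n
  have hdecay : Tendsto (fun t => truncatedLogSeries n t - t) atTop atBot :=
    hΦ.add_atBot tendsto_neg_atTop_atBot
  simpa using (hΦ.rexp).add ((tendsto_exp_atBot.comp hdecay).const_mul (n : ℝ))

/-- The Campbell-formula computation of the mean running time:
`∫_0^∞ (∑_{i=1}^{m-1} i λ_i(t)) e^{-∫_0^t λ_m(s)ds} dt + m = e^{H_{m-1}}`,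
where `λ_i(t) = (1-e^{-t})^{i-1} e^{-t}` and `λ_m(t) = (1-e^{-t})^{m-1}`. -/
theorem stmt10 (m : ℕ) (hm : 2 ≤ m) :
    (∫ t in Set.Ioi (0 : ℝ),
        (∑ i ∈ Finset.Icc 1 (m - 1), (i : ℝ) * (1 - Real.exp (-t)) ^ (i - 1) * Real.exp (-t)) *
          Real.exp (-(∫ s in (0 : ℝ)..t, (1 - Real.exp (-s)) ^ (m - 1)))) + (m : ℝ) =
      Real.exp ((harmonic (m - 1) : ℚ) : ℝ) := by
  obtain ⟨n, rfl⟩ : ∃ n, m = n + 1 := ⟨m - 1, by omega⟩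
  have hnonneg (t : ℝ) (ht : t ∈ Set.Ioi 0) :
      0 ≤ (∑ i ∈ Icc 1 n, (i : ℝ) * (1 - exp (-t)) ^ (i - 1) * exp (-t)) *
        exp (-(t - truncatedLogSeries n t)) := by
    have hx : 0 ≤ 1 - exp (-t) := by simpa using exp_le_one_iff.mpr (neg_nonpos.mpr ht.out.le)
    positivity
  simp only [Nat.add_sub_cancel, integral_one_sub_exp_neg_pow]
  rw [integral_Ioi_of_hasDerivAt_of_nonneg' (fun t _ => hasDerivAt_exp_truncatedLogSeries n t)
    hnonneg (tendsto_exp_truncatedLogSeries n)]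
  simp only [truncatedLogSeries_zero_right, exp_zero, zero_sub, neg_zero, mul_one]
  push_cast
  ring
end

section
/- Let $m \geq 2$ and define $\lambda_i(t) := (1-e^{-t})^{i-1}e^{-t}$. Then $\int_0^\infty e^t\,[1-(1-e^{-t})^{m-1}]\, e^{-\int_0^t (1-e^{-s})^{m-1}\,ds}\,dt = e^{H_{m-1}} - 1$, where $H_{m-1}$ is the $(m-1)$-th harmonic number. -/
/-!
Since `e^t · e^{-∫_0^t (1-e^{-s})^{m-1} ds} = exp ∫_0^t h` with `h(s) = 1 - (1-e^{-s})^{m-1}`,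
the integrand is the derivative of `exp ∫_0^t h`, so the integral equals `exp (∫_0^∞ h) - 1`.
By the geometric sum, `h(s) = ∑_{k<m-1} e^{-s} (1-e^{-s})^k`, and the `k`-th term has primitive
`(1-e^{-s})^{k+1}/(k+1)`, hence integral `1/(k+1)`; so `∫_0^∞ h = H_{m-1}`.
-/

open MeasureTheory Filter Set Real Topology

theorem integral_mul_exp_intervalIntegral {h : ℝ → ℝ} {a : ℝ} (hc : Continuous h)
    (hnn : ∀ t ∈ Ioi a, 0 ≤ h t) (hi : IntegrableOn h (Ioi a)) :
    ∫ t in Ioi a, h t * exp (∫ s in a..t, h s) = exp (∫ s in Ioi a, h s) - 1 := by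
  have hderiv : ∀ t ∈ Ici a, HasDerivAt (fun t => exp (∫ s in a..t, h s))
      (h t * exp (∫ s in a..t, h s)) t := fun t _ => by
    simpa [mul_comm] using (hc.integral_hasStrictDerivAt a t).hasDerivAt.exp
  have hlim :
      Tendsto (fun t => exp (∫ s in a..t, h s)) atTop (𝓝 (exp (∫ s in Ioi a, h s))) :=
    (continuous_exp.tendsto _).comp (intervalIntegral_tendsto_integral_Ioi a hi tendsto_id)
  simpa using integral_Ioi_of_hasDerivAt_of_nonneg' hderiv
    (fun t ht => mul_nonneg (hnn t ht) (exp_pos _).le) hlim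

lemma hasDerivAt_one_sub_exp_neg_pow_succ_div (k : ℕ) (s : ℝ) :
    HasDerivAt (fun s => (1 - exp (-s)) ^ (k + 1) / (k + 1))
      (exp (-s) * (1 - exp (-s)) ^ k) s := by
  have h := (((hasDerivAt_neg s).exp.const_sub 1).pow (k + 1)).div_const ((k : ℝ) + 1)
  refine h.congr_deriv ?_
  field_simp
  push_cast
  ring

lemma tendsto_one_sub_exp_neg_pow_succ_div (k : ℕ) :
    Tendsto (fun s => (1 - exp (-s)) ^ (k + 1) / (k + 1)) atTop (𝓝 (1 / (k + 1))) := by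
  have h := (tendsto_const_nhds (x := (1 : ℝ))).sub tendsto_exp_neg_atTop_nhds_zero
  simpa using (h.pow (k + 1)).div_const ((k : ℝ) + 1)

lemma exp_neg_mul_one_sub_exp_neg_pow_nonneg (k : ℕ) {s : ℝ} (hs : 0 ≤ s) :
    0 ≤ exp (-s) * (1 - exp (-s)) ^ k :=
  mul_nonneg (exp_pos _).le (pow_nonneg (sub_nonneg.2 (exp_le_one_iff.2 (neg_nonpos.2 hs))) k)

lemma integrableOn_exp_neg_mul_one_sub_exp_neg_pow (k : ℕ) :
    IntegrableOn (fun s => exp (-s) * (1 - exp (-s)) ^ k) (Ioi 0) :=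
  integrableOn_Ioi_deriv_of_nonneg' (fun s _ => hasDerivAt_one_sub_exp_neg_pow_succ_div k s)
    (fun _ hs => exp_neg_mul_one_sub_exp_neg_pow_nonneg k hs.le)
    (tendsto_one_sub_exp_neg_pow_succ_div k)

lemma integral_exp_neg_mul_one_sub_exp_neg_pow (k : ℕ) :
    ∫ s in Ioi 0, exp (-s) * (1 - exp (-s)) ^ k = 1 / (k + 1) := by
  simpa using integral_Ioi_of_hasDerivAt_of_nonneg'
    (fun s _ => hasDerivAt_one_sub_exp_neg_pow_succ_div k s)
    (fun _ hs => exp_neg_mul_one_sub_exp_neg_pow_nonneg k hs.le)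
    (tendsto_one_sub_exp_neg_pow_succ_div k)

lemma one_sub_one_sub_exp_neg_pow_eq_sum (n : ℕ) (s : ℝ) :
    1 - (1 - exp (-s)) ^ n = ∑ k ∈ Finset.range n, exp (-s) * (1 - exp (-s)) ^ k := by
  rw [← Finset.mul_sum, ← mul_neg_geom_sum, sub_sub_cancel]

lemma one_sub_one_sub_exp_neg_pow_nonneg (n : ℕ) {s : ℝ} (hs : 0 ≤ s) :
    0 ≤ 1 - (1 - exp (-s)) ^ n := by
  rw [one_sub_one_sub_exp_neg_pow_eq_sum]
  exact Finset.sum_nonneg fun k _ => exp_neg_mul_one_sub_exp_neg_pow_nonneg k hs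

lemma integrableOn_one_sub_one_sub_exp_neg_pow (n : ℕ) :
    IntegrableOn (fun s => 1 - (1 - exp (-s)) ^ n) (Ioi 0) := by
  simp_rw [one_sub_one_sub_exp_neg_pow_eq_sum]
  exact integrable_finsetSum _ fun k _ => integrableOn_exp_neg_mul_one_sub_exp_neg_pow k

lemma integral_one_sub_one_sub_exp_neg_pow (n : ℕ) :
    ∫ s in Ioi 0, 1 - (1 - exp (-s)) ^ n = (harmonic n : ℝ) := by
  simp_rw [one_sub_one_sub_exp_neg_pow_eq_sum]
  rw [integral_finsetSum _ fun k _ => integrableOn_exp_neg_mul_one_sub_exp_neg_pow k, harmonic]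
  push_cast
  simp [integral_exp_neg_mul_one_sub_exp_neg_pow]

theorem stmt12_general (m : ℕ) :
    ∫ t in Set.Ioi (0 : ℝ),
        Real.exp t * (1 - (1 - Real.exp (-t)) ^ (m - 1)) *
          Real.exp (-(∫ s in (0 : ℝ)..t, (1 - Real.exp (-s)) ^ (m - 1))) =
      Real.exp ((harmonic (m - 1) : ℚ) : ℝ) - 1 := by
  have hc : Continuous fun s : ℝ => (1 - exp (-s)) ^ (m - 1) := by fun_prop
  rw [← integral_one_sub_one_sub_exp_neg_pow, ← integral_mul_exp_intervalIntegral (by fun_prop)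
    (fun t ht => one_sub_one_sub_exp_neg_pow_nonneg _ ht.le)
    (integrableOn_one_sub_one_sub_exp_neg_pow _)]
  refine setIntegral_congr_fun measurableSet_Ioi fun t _ => ?_
  rw [intervalIntegral.integral_sub intervalIntegrable_const (hc.intervalIntegrable 0 t),
    intervalIntegral.integral_const, sub_eq_add_neg _ (∫ s in (0 : ℝ)..t, _), exp_add]
  simp only [sub_zero, smul_eq_mul, mul_one]
  ring

/-- The key integral `I₁`:
`∫_0^∞ e^t [1-(1-e^{-t})^{m-1}] e^{-∫_0^t (1-e^{-s})^{m-1} ds} dt = e^{H_{m-1}} - 1`. -/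
theorem stmt12 (m : ℕ) (hm : 2 ≤ m) :
    ∫ t in Set.Ioi (0 : ℝ),
        Real.exp t * (1 - (1 - Real.exp (-t)) ^ (m - 1)) *
          Real.exp (-(∫ s in (0 : ℝ)..t, (1 - Real.exp (-s)) ^ (m - 1))) =
      Real.exp ((harmonic (m - 1) : ℚ) : ℝ) - 1 :=
  stmt12_general m
end
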